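/- Fix integers k ≥ 1, m ≥ 1 and a time t > 0. Let {X_[r]j : r = 1,…,k; j = 1,…,m} be mutually independent nonnegative random variables where X_[r]j has CDF F_[r] with F_[r](t) > 0; let K_[r](t) = (∫₀ᵗ F_[r](x)dx)/F_[r](t) and σ²_[r](t) = (2∫₀ᵗ(t−x)F_[r](x)dx)/F_[r](t) − K_[r](t)². Define V_r = Σ_{j=1}^{m} 1{X_[r]j ≤ t}, U_r = Σ_{j=1}^{m} (t − X_[r]j) 1{X_[r]j ≤ t}, and K_RSS(t) = (Σ_r U_r)·1{Σ_r V_r > 0}/(Σ_r V_r) (taken to be 0 when Σ_r V_r = 0). Then Var[K_RSS(t)] = Σ_{v: Σv_r>0} [p(v)/(Σ_r v_r)²] Σ_{r=1}^{k} v_r σ²_[r](t) + Σ_{v: Σv_r>0} [p(v)/(Σ_r v_r)²] (Σ_{r=1}^{k} v_r K_[r](t))² − ( Σ_{v: Σv_r>0} [p(v)/(Σ_r v_r)] Σ_{r=1}^{k} v_r K_[r](t) )², where the sums range over v ∈ {0,…,m}^k with v₁+⋯+v_k > 0 and p(v) = Π_{r=1}^{k} C(m,v_r) F_[r](t)^{v_r}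 (1 − F_[r](t))^{m−v_r}. -/

import Mathlib

/-!
Split `Ω` according to the set `S` of indices whose observation is `≤ t`. On that event the
estimator is the average of `t - X_i` over `i ∈ S`, and independence makes the `X_i`, `i ∈ S`,
behave as independent variables with the laws conditioned on `X_i ≤ t`. So the event contributes
`P(S) (∑ K_i) / |S|` to the first moment and `P(S) (∑ σ²_i + (∑ K_i)²) / |S|²` to the second.
Patterns with the same row counts `v` have the same probability, and there are `∏ C(m, v_r)` of
them, which produces `p(v)`. The conditional moments come from the layer-cake identities
`E[(t - X) 1{X ≤ t}] = ∫₀ᵗ F` and `E[(t - X)² 1{X ≤ t}] = 2 ∫₀ᵗ (t - x) F(x) dx` (Fubini).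
-/

open MeasureTheory ProbabilityTheory Finset

lemma measurableSet_le_iff {α : Type*} [MeasurableSpace α] {f : α → ℝ} (hf : Measurable f)
    (t : ℝ) (p : Prop) : MeasurableSet {x | f x ≤ t ↔ p} := by
  by_cases hp : p
  · simpa [hp] using measurableSet_le hf measurable_const
  · simpa [hp] using measurableSet_lt measurable_const hf

section Cond

variable {Ω : Type*} [MeasurableSpace Ω] {μ : Measure Ω}

lemma integral_cond_eq_div (s : Set Ω) (f : Ω → ℝ) :
    ∫ ω, f ω ∂μ[|s] = (∫ ω in s, f ω ∂μ) / μ.real s := by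
  rw [ProbabilityTheory.cond, integral_smul_measure, ENNReal.toReal_inv, smul_eq_mul,
    ← measureReal_def, inv_mul_eq_div]

lemma measureReal_mul_integral_cond [IsFiniteMeasure μ] (s : Set Ω) (f : Ω → ℝ) :
    μ.real s * ∫ ω, f ω ∂μ[|s] = ∫ ω in s, f ω ∂μ := by
  by_cases hs : μ s = 0
  · simp [measureReal_def, hs, Measure.restrict_eq_zero.mpr hs]
  · rw [integral_cond_eq_div, mul_div_cancel₀]
    exact ENNReal.toReal_ne_zero.mpr ⟨hs, measure_ne_top μ s⟩

noncomputable def meanPastLifetime (μ : Measure Ω) (Z : Ω → ℝ) (t : ℝ) : ℝ :=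
  ∫ ω, (t - Z ω) ∂μ[|{ω | Z ω ≤ t}]

noncomputable def pastLifetimeVariance (μ : Measure Ω) (Z : Ω → ℝ) (t : ℝ) : ℝ :=
  ∫ ω, (t - Z ω) ^ 2 ∂μ[|{ω | Z ω ≤ t}] - meanPastLifetime μ Z t ^ 2

end Cond

section LayerCake

variable {Ω : Type*} [MeasurableSpace Ω] {μ : Measure Ω} {Z : Ω → ℝ} {t : ℝ}

lemma setIntegral_Icc_indicator_Ici {φ : ℝ → ℝ} {z : ℝ} (hz : 0 ≤ z) (hzt : z ≤ t) :
    ∫ x in Set.Icc 0 t, (Set.Ici z).indicator φ x = ∫ x in z..t, φ x := by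
  have hset : Set.Ici z ∩ Set.Icc 0 t = Set.Icc z t := by
    ext x; simp only [Set.mem_inter_iff, Set.mem_Ici, Set.mem_Icc]; grind
  rw [integral_indicator measurableSet_Ici, Measure.restrict_restrict measurableSet_Ici, hset,
    integral_Icc_eq_integral_Ioc, intervalIntegral.integral_of_le hzt]

lemma setIntegral_intervalIntegral_eq_integral_mul_cdf [IsFiniteMeasure μ] (hZ : Measurable Z)
    (hZ0 : ∀ ω, 0 ≤ Z ω) (ht : 0 ≤ t) {φ : ℝ → ℝ} (hφ : IntegrableOn φ (Set.Icc 0 t)) :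
    ∫ ω in {ω | Z ω ≤ t}, (∫ x in Z ω..t, φ x) ∂μ
      = ∫ x in 0..t, φ x * μ.real {ω | Z ω ≤ x} := by
  have hA : MeasurableSet {ω | Z ω ≤ t} := hZ measurableSet_Iic
  have hint : Integrable (Function.uncurry fun ω x => (Set.Ici (Z ω)).indicator φ x)
      ((μ.restrict {ω | Z ω ≤ t}).prod (volume.restrict (Set.Icc 0 t))) := by
    have hset : MeasurableSet {p : Ω × ℝ | Z p.1 ≤ p.2} :=
      measurableSet_le (hZ.comp measurable_fst) measurable_snd
    exact (hφ.comp_snd _).indicator hset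
  calc ∫ ω in {ω | Z ω ≤ t}, (∫ x in Z ω..t, φ x) ∂μ
      = ∫ ω in {ω | Z ω ≤ t}, (∫ x in Set.Icc 0 t, (Set.Ici (Z ω)).indicator φ x) ∂μ :=
        setIntegral_congr_fun hA fun ω hω =>
          (setIntegral_Icc_indicator_Ici (hZ0 ω) hω).symm
    _ = ∫ x in Set.Icc 0 t, (∫ ω in {ω | Z ω ≤ t}, (Set.Ici (Z ω)).indicator φ x ∂μ) :=
        integral_integral_swap hint
    _ = ∫ x in Set.Icc 0 t, φ x * μ.real {ω | Z ω ≤ x} := by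
        refine setIntegral_congr_fun measurableSet_Icc fun x hx => ?_
        have hx' : {ω | Z ω ≤ x} ∩ {ω | Z ω ≤ t} = {ω | Z ω ≤ x} :=
          Set.inter_eq_left.mpr fun ω hω => le_trans hω hx.2
        have hmeas : MeasurableSet {ω | Z ω ≤ x} := hZ measurableSet_Iic
        change ∫ ω in _, {ω | Z ω ≤ x}.indicator (fun _ => φ x) ω ∂μ = _
        rw [integral_indicator_const _ hmeas, measureReal_restrict_apply hmeas, hx',
          smul_eq_mul, mul_comm]
    _ = ∫ x in 0..t, φ x * μ.real {ω | Z ω ≤ x} := by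
        rw [integral_Icc_eq_integral_Ioc, intervalIntegral.integral_of_le ht]

lemma setIntegral_sub_eq_integral_cdf [IsFiniteMeasure μ] (hZ : Measurable Z)
    (hZ0 : ∀ ω, 0 ≤ Z ω) (ht : 0 ≤ t) :
    ∫ ω in {ω | Z ω ≤ t}, (t - Z ω) ∂μ = ∫ x in 0..t, μ.real {ω | Z ω ≤ x} := by
  simpa using setIntegral_intervalIntegral_eq_integral_mul_cdf (μ := μ) hZ hZ0 ht
    (integrableOn_const (C := (1 : ℝ)) measure_Icc_lt_top.ne)

lemma intervalIntegral_two_mul_sub (z t : ℝ) : ∫ x in z..t, 2 * (t - x) = (t - z) ^ 2 := by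
  rw [intervalIntegral.integral_const_mul, intervalIntegral.integral_sub intervalIntegrable_const
    intervalIntegral.intervalIntegrable_id, integral_id, intervalIntegral.integral_const,
    smul_eq_mul]
  ring

lemma setIntegral_sub_sq_eq_integral_cdf [IsFiniteMeasure μ] (hZ : Measurable Z)
    (hZ0 : ∀ ω, 0 ≤ Z ω) (ht : 0 ≤ t) :
    ∫ ω in {ω | Z ω ≤ t}, (t - Z ω) ^ 2 ∂μ
      = 2 * ∫ x in 0..t, (t - x) * μ.real {ω | Z ω ≤ x} := by
  have h := setIntegral_intervalIntegral_eq_integral_mul_cdf (μ := μ) hZ hZ0 ht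
    (φ := fun x => 2 * (t - x)) (Continuous.integrableOn_Icc (by fun_prop))
  simp only [intervalIntegral_two_mul_sub, mul_assoc] at h
  rw [h, intervalIntegral.integral_const_mul]

lemma meanPastLifetime_eq_integral_cdf_div [IsFiniteMeasure μ] (hZ : Measurable Z)
    (hZ0 : ∀ ω, 0 ≤ Z ω) (ht : 0 ≤ t) :
    meanPastLifetime μ Z t = (∫ x in 0..t, μ.real {ω | Z ω ≤ x}) / μ.real {ω | Z ω ≤ t} := by
  rw [meanPastLifetime, integral_cond_eq_div, setIntegral_sub_eq_integral_cdf hZ hZ0 ht]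

lemma pastLifetimeVariance_eq_integral_cdf_div [IsFiniteMeasure μ] (hZ : Measurable Z)
    (hZ0 : ∀ ω, 0 ≤ Z ω) (ht : 0 ≤ t) :
    pastLifetimeVariance μ Z t
      = (2 * ∫ x in 0..t, (t - x) * μ.real {ω | Z ω ≤ x}) / μ.real {ω | Z ω ≤ t}
        - meanPastLifetime μ Z t ^ 2 := by
  rw [pastLifetimeVariance, integral_cond_eq_div, setIntegral_sub_sq_eq_integral_cdf hZ hZ0 ht]

end LayerCake

lemma sum_sum_ite_eq_sum_sub_sq_add_sq {ι : Type*} [DecidableEq ι] (s : Finset ι)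
    (M K : ι → ℝ) :
    ∑ i ∈ s, ∑ j ∈ s, (if i = j then M i else K i * K j)
      = ∑ i ∈ s, (M i - K i ^ 2) + (∑ i ∈ s, K i) ^ 2 := by
  have h : ∀ i j, (if i = j then M i else K i * K j)
      = K i * K j + if i = j then M i - K i ^ 2 else 0 := by
    intro i j
    split_ifs with hij
    · subst hij; ring
    · ring
  simp only [h, sum_add_distrib, sum_ite_eq, sum_ite_mem, inter_self, sq, sum_mul_sum]
  ring

section Pattern

variable {Ω ι : Type*} {Z : ι → Ω → ℝ} {t : ℝ}

def patternSet (Z : ι → Ω → ℝ) (t : ℝ) (S : Finset ι) : Set Ω :=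
  {ω | ∀ i, Z i ω ≤ t ↔ i ∈ S}

lemma pairwise_disjoint_patternSet : Pairwise (Function.onFun Disjoint (patternSet Z t)) := by
  intro S S' hSS'
  refine Set.disjoint_left.mpr fun ω hω hω' => hSS' ?_
  ext i
  rw [← hω i, hω' i]

lemma iUnion_patternSet [Fintype ι] : ⋃ S, patternSet Z t S = Set.univ := by
  classical
  refine Set.eq_univ_of_forall fun ω =>
    Set.mem_iUnion.mpr ⟨({i | Z i ω ≤ t} : Finset ι), fun i => ?_⟩
  simp

lemma sub_mem_Icc_of_mem_patternSet (hZ0 : ∀ i ω, 0 ≤ Z i ω) {S : Finset ι} {ω : Ω}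
    (hω : ω ∈ patternSet Z t S) {i : ι} (hi : i ∈ S) : t - Z i ω ∈ Set.Icc 0 t :=
  ⟨sub_nonneg.mpr ((hω i).mpr hi), sub_le_self t (hZ0 i ω)⟩

variable [Fintype ι] [MeasurableSpace Ω] {μ : Measure Ω}

lemma measurableSet_patternSet (hZ : ∀ i, Measurable (Z i)) (S : Finset ι) :
    MeasurableSet (patternSet Z t S) := by
  rw [patternSet, Set.ofPred_forall]
  exact MeasurableSet.iInter fun i => measurableSet_le_iff (hZ i) t (i ∈ S)

lemma integral_eq_sum_setIntegral_patternSet (hZ : ∀ i, Measurable (Z i)) {f : Ω → ℝ}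
    (hf : Integrable f μ) :
    ∫ ω, f ω ∂μ = ∑ S, ∫ ω in patternSet Z t S, f ω ∂μ := by
  rw [← integral_iUnion_fintype (measurableSet_patternSet hZ) pairwise_disjoint_patternSet
    fun S => hf.integrableOn, iUnion_patternSet, setIntegral_univ]

lemma setIntegral_patternSet_prod (hZ : ∀ i, Measurable (Z i)) (hind : iIndepFun Z μ)
    (S : Finset ι) {h : ι → ℝ → ℝ} (hh : ∀ i, Measurable (h i)) :
    ∫ ω in patternSet Z t S, ∏ i, h i (Z i ω) ∂μ
      = ∏ i, ∫ ω in {ω | Z i ω ≤ t ↔ i ∈ S}, h i (Z i ω) ∂μ := by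
  set g : ι → ℝ → ℝ := fun i => {x | x ≤ t ↔ i ∈ S}.indicator (h i)
  have hg : ∀ i, Measurable (g i) := fun i =>
    (hh i).indicator (measurableSet_le_iff measurable_id t (i ∈ S))
  have hprod : (patternSet Z t S).indicator (fun ω => ∏ i, h i (Z i ω))
      = fun ω => ∏ i, g i (Z i ω) := by
    funext ω
    simp only [Set.indicator, patternSet, Set.mem_ofPred_eq, g, Fintype.prod_ite_zero]
    congr
  rw [← integral_indicator (measurableSet_patternSet hZ S), hprod,
    hind.integral_fun_prod_comp (fun i => (hZ i).aemeasurable)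
      fun i => (hg i).aestronglyMeasurable]
  refine Finset.prod_congr rfl fun i _ => ?_
  rw [← integral_indicator (measurableSet_le_iff (hZ i) t (i ∈ S))]
  rfl

lemma measureReal_patternSet [DecidableEq ι] [IsProbabilityMeasure μ]
    (hZ : ∀ i, Measurable (Z i)) (hind : iIndepFun Z μ) (S : Finset ι) :
    μ.real (patternSet Z t S)
      = ∏ i, if i ∈ S then μ.real {ω | Z i ω ≤ t} else 1 - μ.real {ω | Z i ω ≤ t} := by
  have h := setIntegral_patternSet_prod hZ hind S (t := t) (h := fun _ _ => (1 : ℝ))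
    fun _ => measurable_const
  simp only [prod_const_one, integral_const, smul_eq_mul, mul_one,
    measureReal_restrict_apply_univ] at h
  rw [h]
  refine Finset.prod_congr rfl fun i _ => ?_
  split_ifs with hi
  · simp [hi]
  · rw [← probReal_compl_eq_one_sub (measurableSet_le (hZ i) measurable_const)]
    simp [hi, Set.compl_ofPred]

lemma setIntegral_patternSet_prod_eq_mul_prod_cond [IsFiniteMeasure μ]
    (hZ : ∀ i, Measurable (Z i)) (hind : iIndepFun Z μ) {S T : Finset ι} (hTS : T ⊆ S)
    {g : ι → ℝ → ℝ} (hg : ∀ i, Measurable (g i)) :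
    ∫ ω in patternSet Z t S, ∏ i ∈ T, g i (Z i ω) ∂μ
      = μ.real (patternSet Z t S) * ∏ i ∈ T, ∫ ω, g i (Z i ω) ∂μ[|{ω | Z i ω ≤ t}] := by
  classical
  have hT := setIntegral_patternSet_prod hZ hind S (t := t)
    (h := fun i => if i ∈ T then g i else fun _ => 1)
    fun i => by split_ifs; exacts [hg i, measurable_const]
  have h1 := setIntegral_patternSet_prod hZ hind S (t := t) (h := fun _ _ => (1 : ℝ))
    fun _ => measurable_const
  simp only [prod_const_one, integral_const, smul_eq_mul, mul_one,
    measureReal_restrict_apply_univ] at h1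
  simp only [ite_apply, Fintype.prod_ite_mem] at hT
  rw [hT, h1, ← Fintype.prod_ite_mem T, ← prod_mul_distrib]
  refine Finset.prod_congr rfl fun i _ => ?_
  split_ifs with hi
  · simp only [hTS hi, iff_true]
    exact (measureReal_mul_integral_cond _ _).symm
  · simp

lemma integrableOn_patternSet_of_abs_le [IsFiniteMeasure μ] (hZ : ∀ i, Measurable (Z i))
    {S : Finset ι} {f : Ω → ℝ} (hf : Measurable f) (C : ℝ)
    (hC : ∀ ω ∈ patternSet Z t S, |f ω| ≤ C) : IntegrableOn f (patternSet Z t S) μ :=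
  IntegrableOn.of_bound (measure_lt_top _ _) hf.aestronglyMeasurable C
    (ae_restrict_of_forall_mem (measurableSet_patternSet hZ S) hC)

lemma setIntegral_patternSet_sum_sub [IsFiniteMeasure μ] (hZ : ∀ i, Measurable (Z i))
    (hZ0 : ∀ i ω, 0 ≤ Z i ω) (hind : iIndepFun Z μ) (S : Finset ι) :
    ∫ ω in patternSet Z t S, ∑ i ∈ S, (t - Z i ω) ∂μ
      = μ.real (patternSet Z t S) * ∑ i ∈ S, meanPastLifetime μ (Z i) t := by
  rw [integral_finsetSum S fun i hi => ?_, mul_sum]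
  · refine sum_congr rfl fun i hi => ?_
    simpa [meanPastLifetime] using setIntegral_patternSet_prod_eq_mul_prod_cond hZ hind
      (singleton_subset_iff.mpr hi) (g := fun _ x => t - x) fun _ => by fun_prop
  · refine integrableOn_patternSet_of_abs_le hZ (by fun_prop) t fun ω hω => ?_
    obtain ⟨h0, hle⟩ := sub_mem_Icc_of_mem_patternSet hZ0 hω hi
    rwa [abs_of_nonneg h0]

lemma setIntegral_patternSet_sub_mul_sub [DecidableEq ι] [IsFiniteMeasure μ]
    (hZ : ∀ i, Measurable (Z i)) (hind : iIndepFun Z μ) {S : Finset ι} {i j : ι} (hi : i ∈ S)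
    (hj : j ∈ S) :
    ∫ ω in patternSet Z t S, (t - Z i ω) * (t - Z j ω) ∂μ
      = μ.real (patternSet Z t S) * if i = j then ∫ ω, (t - Z i ω) ^ 2 ∂μ[|{ω | Z i ω ≤ t}]
          else meanPastLifetime μ (Z i) t * meanPastLifetime μ (Z j) t := by
  split_ifs with hij
  · subst hij
    have h := setIntegral_patternSet_prod_eq_mul_prod_cond (t := t) hZ hind
      (singleton_subset_iff.mpr hi) (g := fun _ x => (t - x) ^ 2) fun _ => by fun_prop
    simpa only [prod_singleton, ← sq] using h
  · simpa [meanPastLifetime, prod_pair hij] using setIntegral_patternSet_prod_eq_mul_prod_cond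
      hZ hind (insert_subset hi (singleton_subset_iff.mpr hj)) (g := fun _ x => t - x)
      fun _ => by fun_prop

lemma setIntegral_patternSet_sum_sub_sq [IsFiniteMeasure μ] (hZ : ∀ i, Measurable (Z i))
    (hZ0 : ∀ i ω, 0 ≤ Z i ω) (hind : iIndepFun Z μ) (S : Finset ι) :
    ∫ ω in patternSet Z t S, (∑ i ∈ S, (t - Z i ω)) ^ 2 ∂μ
      = μ.real (patternSet Z t S) * (∑ i ∈ S, pastLifetimeVariance μ (Z i) t
          + (∑ i ∈ S, meanPastLifetime μ (Z i) t) ^ 2) := by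
  classical
  have hint : ∀ i ∈ S, ∀ j ∈ S,
      IntegrableOn (fun ω => (t - Z i ω) * (t - Z j ω)) (patternSet Z t S) μ :=
    fun i hi j hj => integrableOn_patternSet_of_abs_le hZ (by fun_prop) (t * t) fun ω hω => by
      obtain ⟨hi0, hit⟩ := sub_mem_Icc_of_mem_patternSet hZ0 hω hi
      obtain ⟨hj0, hjt⟩ := sub_mem_Icc_of_mem_patternSet hZ0 hω hj
      rw [abs_of_nonneg (mul_nonneg hi0 hj0)]
      exact mul_le_mul hit hjt hj0 (hi0.trans hit)
  simp_rw [sq, sum_mul_sum]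
  rw [integral_finsetSum S fun i hi => integrable_finsetSum S (hint i hi)]
  calc ∑ i ∈ S, ∫ ω in patternSet Z t S, ∑ j ∈ S, (t - Z i ω) * (t - Z j ω) ∂μ
      = ∑ i ∈ S, ∑ j ∈ S, μ.real (patternSet Z t S) *
          if i = j then ∫ ω, (t - Z i ω) * (t - Z i ω) ∂μ[|{ω | Z i ω ≤ t}]
          else meanPastLifetime μ (Z i) t * meanPastLifetime μ (Z j) t := by
        refine sum_congr rfl fun i hi => ?_
        rw [integral_finsetSum S (hint i hi)]
        refine sum_congr rfl fun j hj => ?_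
        simpa only [sq] using setIntegral_patternSet_sub_mul_sub hZ hind hi hj
    _ = _ := by
        simp_rw [← mul_sum]
        rw [sum_sum_ite_eq_sum_sub_sq_add_sq]
        simp only [pastLifetimeVariance, sq, sum_mul]

end Pattern

section Pooled

variable {Ω ι : Type*} [Fintype ι] {Z : ι → Ω → ℝ} {t : ℝ}

/-- When no `Z i ω` is `≤ t` the denominator vanishes and the value is `0`, by `x / 0 = 0`. -/
noncomputable def pooledMeanPastLifetime (Z : ι → Ω → ℝ) (t : ℝ) (ω : Ω) : ℝ :=
  (∑ i, (t - Z i ω) * (if Z i ω ≤ t then 1 else 0)) / ∑ i, (if Z i ω ≤ t then (1 : ℝ) else 0)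

lemma pooledMeanPastLifetime_eq_of_mem_patternSet {S : Finset ι} {ω : Ω}
    (hω : ω ∈ patternSet Z t S) :
    pooledMeanPastLifetime Z t ω = (∑ i ∈ S, (t - Z i ω)) / #S := by
  have hS : ({i | Z i ω ≤ t} : Finset ι) = S := by
    ext i
    simpa using hω i
  simp only [pooledMeanPastLifetime, mul_ite, mul_one, mul_zero, sum_boole, ← sum_filter, hS]

lemma pooledMeanPastLifetime_mem_Icc (hZ0 : ∀ i ω, 0 ≤ Z i ω) (ht : 0 ≤ t) (ω : Ω) :
    pooledMeanPastLifetime Z t ω ∈ Set.Icc 0 t := by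
  refine ⟨div_nonneg (sum_nonneg fun i _ => ?_) (sum_nonneg fun i _ => ?_),
    div_le_of_le_mul₀ (sum_nonneg fun i _ => ?_) ht ?_⟩
  · split_ifs with h <;> simp [h]
  · split_ifs <;> norm_num
  · split_ifs <;> norm_num
  · rw [mul_sum]
    refine sum_le_sum fun i _ => ?_
    split_ifs <;> linarith [hZ0 i ω]

lemma pooledMeanPastLifetime_prod {α β : Type*} [Fintype α] [Fintype β] (X : α → β → Ω → ℝ)
    (t : ℝ) (ω : Ω) :
    pooledMeanPastLifetime (fun p : α × β => X p.1 p.2) t ω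
      = if 0 < ∑ a, ∑ b, (if X a b ω ≤ t then (1 : ℝ) else 0) then
          (∑ a, ∑ b, (t - X a b ω) * (if X a b ω ≤ t then 1 else 0))
            / ∑ a, ∑ b, (if X a b ω ≤ t then (1 : ℝ) else 0)
        else 0 := by
  have hden : 0 ≤ ∑ a, ∑ b, (if X a b ω ≤ t then (1 : ℝ) else 0) :=
    sum_nonneg fun a _ => sum_nonneg fun b _ => by split_ifs <;> norm_num
  rw [pooledMeanPastLifetime, Fintype.sum_prod_type, Fintype.sum_prod_type]
  split_ifs with h
  · rfl
  · rw [le_antisymm (not_lt.mp h) hden, div_zero]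

variable [MeasurableSpace Ω] {μ : Measure Ω}

lemma measurable_pooledMeanPastLifetime (hZ : ∀ i, Measurable (Z i)) :
    Measurable (pooledMeanPastLifetime Z t) := by
  have hW : ∀ i, Measurable fun ω => if Z i ω ≤ t then (1 : ℝ) else 0 := fun i =>
    Measurable.ite (measurableSet_le (hZ i) measurable_const) measurable_const measurable_const
  exact (Finset.measurable_sum _ fun i _ => ((hZ i).const_sub t).mul (hW i)).div
    (Finset.measurable_sum _ fun i _ => hW i)

lemma memLp_pooledMeanPastLifetime [IsFiniteMeasure μ] (hZ : ∀ i, Measurable (Z i))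
    (hZ0 : ∀ i ω, 0 ≤ Z i ω) (ht : 0 ≤ t) (p : ENNReal) :
    MemLp (pooledMeanPastLifetime Z t) p μ := by
  refine MemLp.of_bound (measurable_pooledMeanPastLifetime hZ).aestronglyMeasurable t
    (Filter.Eventually.of_forall fun ω => ?_)
  obtain ⟨h0, hle⟩ := pooledMeanPastLifetime_mem_Icc hZ0 ht ω
  rwa [Real.norm_of_nonneg h0]

theorem integral_pooledMeanPastLifetime [IsFiniteMeasure μ] (hZ : ∀ i, Measurable (Z i))
    (hZ0 : ∀ i ω, 0 ≤ Z i ω) (hind : iIndepFun Z μ) (ht : 0 ≤ t) :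
    ∫ ω, pooledMeanPastLifetime Z t ω ∂μ
      = ∑ S, μ.real (patternSet Z t S) / #S * ∑ i ∈ S, meanPastLifetime μ (Z i) t := by
  rw [integral_eq_sum_setIntegral_patternSet hZ
    ((memLp_pooledMeanPastLifetime hZ hZ0 ht 1).integrable le_rfl)]
  refine sum_congr rfl fun S _ => ?_
  rw [setIntegral_congr_fun (measurableSet_patternSet hZ S)
      fun ω hω => pooledMeanPastLifetime_eq_of_mem_patternSet hω,
    integral_div, setIntegral_patternSet_sum_sub hZ hZ0 hind, mul_div_right_comm]

theorem integral_pooledMeanPastLifetime_sq [IsFiniteMeasure μ]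
    (hZ : ∀ i, Measurable (Z i)) (hZ0 : ∀ i ω, 0 ≤ Z i ω) (hind : iIndepFun Z μ) (ht : 0 ≤ t) :
    ∫ ω, pooledMeanPastLifetime Z t ω ^ 2 ∂μ
      = ∑ S, μ.real (patternSet Z t S) / #S ^ 2 * (∑ i ∈ S, pastLifetimeVariance μ (Z i) t
          + (∑ i ∈ S, meanPastLifetime μ (Z i) t) ^ 2) := by
  rw [integral_eq_sum_setIntegral_patternSet hZ
    (memLp_pooledMeanPastLifetime hZ hZ0 ht 2).integrable_sq]
  refine sum_congr rfl fun S _ => ?_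
  rw [setIntegral_congr_fun (measurableSet_patternSet hZ S)
      fun ω hω => by rw [pooledMeanPastLifetime_eq_of_mem_patternSet hω, div_pow],
    integral_div, setIntegral_patternSet_sum_sub_sq hZ hZ0 hind, mul_div_right_comm]

end Pooled

section Rows

variable {α β : Type*} [Fintype α] [Fintype β] [DecidableEq α] [DecidableEq β]

@[simps]
def finsetProdEquivPi : Finset (α × β) ≃ (α → Finset β) where
  toFun S a := {b | (a, b) ∈ S}
  invFun A := {p | p.2 ∈ A p.1}
  left_inv S := by ext p; simp
  right_inv A := by funext a; ext b; simp

lemma sum_fst_eq_sum_card_mul (S : Finset (α × β)) (c : α → ℝ) :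
    ∑ p ∈ S, c p.1 = ∑ a, #(finsetProdEquivPi S a) * c a := by
  rw [← Fintype.sum_ite_mem, Fintype.sum_prod_type]
  simp [← sum_filter]

lemma card_eq_sum_card (S : Finset (α × β)) :
    (#S : ℝ) = ∑ a, (#(finsetProdEquivPi S a) : ℝ) := by
  simpa using sum_fst_eq_sum_card_mul S fun _ => (1 : ℝ)

lemma prod_ite_mem_eq_prod_pow (S : Finset (α × β)) (F H : α → ℝ) :
    ∏ p, (if p ∈ S then F p.1 else H p.1)
      = ∏ a, F a ^ #(finsetProdEquivPi S a)
          * H a ^ (Fintype.card β - #(finsetProdEquivPi S a)) := by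
  rw [Fintype.prod_prod_type]
  refine prod_congr rfl fun a _ => ?_
  rw [prod_ite]
  simp [filter_not, card_univ_sdiff]

lemma sum_comp_card_eq_sum_choose_mul (Ψ : (α → ℕ) → ℝ) :
    ∑ S : Finset (α × β), Ψ (fun a => #(finsetProdEquivPi S a))
      = ∑ v ∈ Fintype.piFinset fun _ => range (Fintype.card β + 1),
          (∏ a, ((Fintype.card β).choose (v a) : ℝ)) * Ψ v := by
  rw [finsetProdEquivPi.sum_comp (fun A => Ψ fun a => #(A a)),
    ← sum_fiberwise_of_maps_to (g := fun A a => #(A a))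
      (t := Fintype.piFinset fun _ => range (Fintype.card β + 1)) fun A _ => by
        simpa [Nat.lt_succ_iff] using fun a => card_le_univ (A a)]
  refine sum_congr rfl fun v _ => ?_
  have hfiber : ({A | (fun a => #(A a)) = v} : Finset (α → Finset β))
      = Fintype.piFinset fun a => powersetCard (v a) univ := by
    ext A
    simp [funext_iff]
  rw [sum_congr rfl fun A hA => congrArg Ψ (mem_filter.mp hA).2, sum_const, hfiber,
    Fintype.card_piFinset, nsmul_eq_mul]
  simp [card_powersetCard]

theorem sum_patterns_eq_sum_binomial (F : α → ℝ) (Ψ : (α → ℕ) → ℝ) :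
    ∑ S : Finset (α × β), (∏ p, if p ∈ S then F p.1 else 1 - F p.1)
        * Ψ (fun a => #(finsetProdEquivPi S a))
      = ∑ v ∈ Fintype.piFinset fun _ => range (Fintype.card β + 1),
          (∏ a, ((Fintype.card β).choose (v a) : ℝ) * F a ^ v a
            * (1 - F a) ^ (Fintype.card β - v a)) * Ψ v := by
  rw [sum_congr rfl fun S _ => by rw [prod_ite_mem_eq_prod_pow S F fun a => 1 - F a],
    sum_comp_card_eq_sum_choose_mul
      (fun v => (∏ a, F a ^ v a * (1 - F a) ^ (Fintype.card β - v a)) * Ψ v)]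
  refine sum_congr rfl fun v _ => ?_
  simp only [mul_assoc, prod_mul_distrib]

end Rows


lemma sum_filter_pos_sum_eq {ι : Type*} [Fintype ι] {s : Finset (ι → ℕ)}
    {f : (ι → ℕ) → ℝ} (hf : ∀ v, ∑ i, (v i : ℝ) = 0 → f v = 0) :
    ∑ v ∈ s with 0 < ∑ i, v i, f v = ∑ v ∈ s, f v :=
  sum_filter_of_ne fun v _ hv => Nat.pos_of_ne_zero fun h => hv (hf v (by exact_mod_cast h))

section RankedSetSample

variable {Ω α β : Type*} [MeasurableSpace Ω] {μ : Measure Ω} [IsProbabilityMeasure μ]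
  [Fintype α] [Fintype β] [DecidableEq α] [DecidableEq β] {Z : α × β → Ω → ℝ} {t : ℝ}
  {F K σ2 : α → ℝ}

theorem integral_pooled_eq_sum_binomial (hZ : ∀ p, Measurable (Z p)) (hZ0 : ∀ p ω, 0 ≤ Z p ω)
    (hind : iIndepFun Z μ) (ht : 0 ≤ t) (hF : ∀ p, μ.real {ω | Z p ω ≤ t} = F p.1)
    (hK : ∀ p, meanPastLifetime μ (Z p) t = K p.1) :
    ∫ ω, pooledMeanPastLifetime Z t ω ∂μ
      = ∑ v ∈ Fintype.piFinset fun _ => range (Fintype.card β + 1),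
          (∏ a, ((Fintype.card β).choose (v a) : ℝ) * F a ^ v a
            * (1 - F a) ^ (Fintype.card β - v a)) / (∑ a, (v a : ℝ)) * ∑ a, (v a : ℝ) * K a := by
  rw [integral_pooledMeanPastLifetime hZ hZ0 hind ht]
  calc _ = ∑ S : Finset (α × β), (∏ p, if p ∈ S then F p.1 else 1 - F p.1)
        * ((∑ a, (#(finsetProdEquivPi S a) : ℝ) * K a) / ∑ a, (#(finsetProdEquivPi S a) : ℝ)) := by
        refine sum_congr rfl fun S _ => ?_
        rw [measureReal_patternSet hZ hind, card_eq_sum_card, ← sum_fst_eq_sum_card_mul]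
        simp only [hF, hK]
        ring
    _ = _ := by
        rw [sum_patterns_eq_sum_binomial F fun v => (∑ a, (v a : ℝ) * K a) / ∑ a, (v a : ℝ)]
        refine sum_congr rfl fun v _ => ?_
        ring

theorem integral_pooled_sq_eq_sum_binomial (hZ : ∀ p, Measurable (Z p))
    (hZ0 : ∀ p ω, 0 ≤ Z p ω) (hind : iIndepFun Z μ) (ht : 0 ≤ t)
    (hF : ∀ p, μ.real {ω | Z p ω ≤ t} = F p.1) (hK : ∀ p, meanPastLifetime μ (Z p) t = K p.1)
    (hσ2 : ∀ p, pastLifetimeVariance μ (Z p) t = σ2 p.1) :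
    ∫ ω, pooledMeanPastLifetime Z t ω ^ 2 ∂μ
      = ∑ v ∈ Fintype.piFinset fun _ => range (Fintype.card β + 1),
          (∏ a, ((Fintype.card β).choose (v a) : ℝ) * F a ^ v a
            * (1 - F a) ^ (Fintype.card β - v a)) / (∑ a, (v a : ℝ)) ^ 2
            * (∑ a, (v a : ℝ) * σ2 a + (∑ a, (v a : ℝ) * K a) ^ 2) := by
  rw [integral_pooledMeanPastLifetime_sq hZ hZ0 hind ht]
  calc _ = ∑ S : Finset (α × β), (∏ p, if p ∈ S then F p.1 else 1 - F p.1)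
        * ((∑ a, (#(finsetProdEquivPi S a) : ℝ) * σ2 a
            + (∑ a, (#(finsetProdEquivPi S a) : ℝ) * K a) ^ 2)
          / (∑ a, (#(finsetProdEquivPi S a) : ℝ)) ^ 2) := by
        refine sum_congr rfl fun S _ => ?_
        rw [measureReal_patternSet hZ hind, card_eq_sum_card, ← sum_fst_eq_sum_card_mul,
          ← sum_fst_eq_sum_card_mul]
        simp only [hF, hK, hσ2]
        ring
    _ = _ := by
        rw [sum_patterns_eq_sum_binomial F fun v =>
          (∑ a, (v a : ℝ) * σ2 a + (∑ a, (v a : ℝ) * K a) ^ 2) / (∑ a, (v a : ℝ)) ^ 2]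
        refine sum_congr rfl fun v _ => ?_
        ring

end RankedSetSample

theorem variance_K_RSS_general
    {Ω : Type*} [MeasurableSpace Ω] (μ : Measure Ω) [IsProbabilityMeasure μ]
    (k m : ℕ) (t : ℝ) (ht : 0 < t)
    (X : Fin k → Fin m → Ω → ℝ) (hXmeas : ∀ r j, Measurable (X r j))
    (hXnn : ∀ r j ω, 0 ≤ X r j ω)
    (hindep : iIndepFun (fun p : Fin k × Fin m => X p.1 p.2) μ)
    (Fr : Fin k → ℝ → ℝ) (hFr : ∀ r j x, Fr r x = (μ {ω | X r j ω ≤ x}).toReal)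
    (Kr : Fin k → ℝ) (hKr : ∀ r, Kr r = (∫ x in (0:ℝ)..t, Fr r x) / Fr r t)
    (σ2r : Fin k → ℝ)
    (hσ2r : ∀ r, σ2r r = (2 * ∫ x in (0:ℝ)..t, (t - x) * Fr r x) / Fr r t - (Kr r) ^ 2)
    (V : Fin k → Ω → ℝ)
    (hV : ∀ r ω, V r ω = ∑ j, (if X r j ω ≤ t then (1 : ℝ) else 0))
    (U : Fin k → Ω → ℝ)
    (hU : ∀ r ω, U r ω = ∑ j, (t - X r j ω) * (if X r j ω ≤ t then (1 : ℝ) else 0))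
    (KRSS : Ω → ℝ)
    (hKRSS : ∀ ω, KRSS ω =
      if 0 < ∑ r, V r ω then (∑ r, U r ω) / (∑ r, V r ω) else 0)
    (p : (Fin k → ℕ) → ℝ)
    (hp : ∀ v, p v = ∏ r, (m.choose (v r) : ℝ) * Fr r t ^ (v r) * (1 - Fr r t) ^ (m - v r)) :
    ProbabilityTheory.variance KRSS μ
      = (∑ v ∈ (Fintype.piFinset fun _ : Fin k => Finset.range (m + 1)).filter
              (fun v => 0 < ∑ r, v r),
            (p v / (∑ r, (v r : ℝ)) ^ 2) * ∑ r, (v r : ℝ) * σ2r r)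
        + (∑ v ∈ (Fintype.piFinset fun _ : Fin k => Finset.range (m + 1)).filter
              (fun v => 0 < ∑ r, v r),
            (p v / (∑ r, (v r : ℝ)) ^ 2) * (∑ r, (v r : ℝ) * Kr r) ^ 2)
        - (∑ v ∈ (Fintype.piFinset fun _ : Fin k => Finset.range (m + 1)).filter
              (fun v => 0 < ∑ r, v r),
            (p v / (∑ r, (v r : ℝ))) * ∑ r, (v r : ℝ) * Kr r) ^ 2 := by
  set Z : Fin k × Fin m → Ω → ℝ := fun p => X p.1 p.2
  have hZ : ∀ p, Measurable (Z p) := fun p => hXmeas p.1 p.2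
  have hZ0 : ∀ p ω, 0 ≤ Z p ω := fun p => hXnn p.1 p.2
  have hcdf : ∀ p x, μ.real {ω | Z p ω ≤ x} = Fr p.1 x := fun p x => by
    rw [hFr p.1 p.2 x, measureReal_def]
  have hK : ∀ p, meanPastLifetime μ (Z p) t = Kr p.1 := fun p => by
    rw [meanPastLifetime_eq_integral_cdf_div (hZ p) (hZ0 p) ht.le, hKr]
    simp only [hcdf]
  have hσ2 : ∀ p, pastLifetimeVariance μ (Z p) t = σ2r p.1 := fun p => by
    rw [pastLifetimeVariance_eq_integral_cdf_div (hZ p) (hZ0 p) ht.le, hσ2r, hK]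
    simp only [hcdf]
  have hpooled : KRSS = pooledMeanPastLifetime Z t := by
    funext ω
    rw [hKRSS ω, pooledMeanPastLifetime_prod]
    simp only [hU, hV]
  have hmean := integral_pooled_eq_sum_binomial hZ hZ0 hindep ht.le (F := fun r => Fr r t)
    (fun p => hcdf p t) hK
  have hsq := integral_pooled_sq_eq_sum_binomial hZ hZ0 hindep ht.le (F := fun r => Fr r t)
    (fun p => hcdf p t) hK hσ2
  simp only [Fintype.card_fin, ← hp] at hmean hsq
  rw [hpooled, variance_eq_sub (memLp_pooledMeanPastLifetime hZ hZ0 ht.le 2)]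
  simp only [Pi.pow_apply]
  rw [sum_filter_pos_sum_eq fun v hv => by simp [hv],
    sum_filter_pos_sum_eq fun v hv => by simp [hv],
    sum_filter_pos_sum_eq fun v hv => by simp [hv], hsq, hmean, ← sum_add_distrib]
  simp only [mul_add]

/-- Fix integers `k ≥ 1`, `m ≥ 1` and a time `t > 0`.  Let
`{X_[r]j : r = 1, …, k; j = 1, …, m}` be mutually independent nonnegative random
variables where `X_[r]j` has CDF `F_[r]` with `F_[r] t > 0`; let
`K_[r] t = (∫₀ᵗ F_[r] x dx)/(F_[r] t)` and
`σ²_[r] t = (2∫₀ᵗ (t-x) F_[r] x dx)/(F_[r] t) - (K_[r] t)²`.  Define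
`V_r = ∑_j 1{X_[r]j ≤ t}`, `U_r = ∑_j (t - X_[r]j) 1{X_[r]j ≤ t}` and
`K_RSS t = (∑_r U_r) 1{∑_r V_r > 0} / (∑_r V_r)` (taken to be `0` when `∑_r V_r = 0`).
Then `Var[K_RSS t]` equals
`∑_{v, ∑ v_r > 0} (p v/(∑ v_r)²) ∑_r v_r σ²_[r] t
 + ∑_{v, ∑ v_r > 0} (p v/(∑ v_r)²) (∑_r v_r K_[r] t)²
 - (∑_{v, ∑ v_r > 0} (p v/(∑ v_r)) ∑_r v_r K_[r] t)²`, where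
`p v = ∏_r C(m, v_r) (F_[r] t)^{v_r} (1 - F_[r] t)^{m - v_r}`. -/
theorem variance_K_RSS
    {Ω : Type*} [MeasurableSpace Ω] (μ : Measure Ω) [IsProbabilityMeasure μ]
    (k m : ℕ) (hk : 1 ≤ k) (hm : 1 ≤ m) (t : ℝ) (ht : 0 < t)
    (X : Fin k → Fin m → Ω → ℝ) (hXmeas : ∀ r j, Measurable (X r j))
    (hXnn : ∀ r j ω, 0 ≤ X r j ω)
    (hindep : iIndepFun (fun p : Fin k × Fin m => X p.1 p.2) μ)
    (Fr : Fin k → ℝ → ℝ) (hFr : ∀ r j x, Fr r x = (μ {ω | X r j ω ≤ x}).toReal)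
    (hFrt : ∀ r, 0 < Fr r t)
    (Kr : Fin k → ℝ) (hKr : ∀ r, Kr r = (∫ x in (0:ℝ)..t, Fr r x) / Fr r t)
    (σ2r : Fin k → ℝ)
    (hσ2r : ∀ r, σ2r r = (2 * ∫ x in (0:ℝ)..t, (t - x) * Fr r x) / Fr r t - (Kr r) ^ 2)
    (V : Fin k → Ω → ℝ)
    (hV : ∀ r ω, V r ω = ∑ j, (if X r j ω ≤ t then (1 : ℝ) else 0))
    (U : Fin k → Ω → ℝ)
    (hU : ∀ r ω, U r ω = ∑ j, (t - X r j ω) * (if X r j ω ≤ t then (1 : ℝ) else 0))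
    (KRSS : Ω → ℝ)
    (hKRSS : ∀ ω, KRSS ω =
      if 0 < ∑ r, V r ω then (∑ r, U r ω) / (∑ r, V r ω) else 0)
    (p : (Fin k → ℕ) → ℝ)
    (hp : ∀ v, p v = ∏ r, (m.choose (v r) : ℝ) * Fr r t ^ (v r) * (1 - Fr r t) ^ (m - v r)) :
    ProbabilityTheory.variance KRSS μ
      = (∑ v ∈ (Fintype.piFinset fun _ : Fin k => Finset.range (m + 1)).filter
              (fun v => 0 < ∑ r, v r),
            (p v / (∑ r, (v r : ℝ)) ^ 2) * ∑ r, (v r : ℝ) * σ2r r)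
        + (∑ v ∈ (Fintype.piFinset fun _ : Fin k => Finset.range (m + 1)).filter
              (fun v => 0 < ∑ r, v r),
            (p v / (∑ r, (v r : ℝ)) ^ 2) * (∑ r, (v r : ℝ) * Kr r) ^ 2)
        - (∑ v ∈ (Fintype.piFinset fun _ : Fin k => Finset.range (m + 1)).filter
              (fun v => 0 < ∑ r, v r),
            (p v / (∑ r, (v r : ℝ))) * ∑ r, (v r : ℝ) * Kr r) ^ 2 :=
  variance_K_RSS_general μ k m t ht X hXmeas hXnn hindep Fr hFr Kr hKr σ2r hσ2r V hV U hU KRSS hKRSS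
    p hp
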